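/- arXiv:1502.06484 — 4 statements merged into one kernel-verified Lean document; each statement's English description precedes it below -/
import Mathlib

section
/- Let $n \ge 1$ and $0 < \lambda < n$. There is a constant $C > 0$, depending only on $n$ and $\lambda$, such that for every radial, decreasing function $f$ on $\mathbb{R}^n$, i.e. $f(x) = \varphi(|x|)$ with $\varphi$ nonnegative and nonincreasing on $(0,\infty)$, one has $$\|f\|_{\mathcal{M}_{1,\lambda}} \;\le\; C \, \sup_{x>0} x^{\lambda - n} \int_0^x \varphi(\rho)\, \rho^{n-1}\, d\rho.$$ -/
/-!
Polar coordinates turn the Morrey quotient of a ball centred at the origin into that of the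
profile: `r^(λ-n) ∫_{B(0,r)} f = n |B₁| r^(λ-n) ∫₀^r φ(ρ) ρ^(n-1) dρ`. A ball `B(x,r)` with
`|x| ≤ 2r` lies in `B(0,3r)`. If `|x| > 2r`, put `t = |x| - r ≥ r`: then `f ≤ φ(t)` on `B(x,r)` and
`f ≥ φ(t)` on `B(0,t)`, so
`r^(λ-n) ∫_{B(x,r)} f ≤ |B₁| r^λ φ(t) ≤ |B₁| t^λ φ(t) ≤ t^(λ-n) ∫_{B(0,t)} f` since `λ ≥ 0`.
-/

open MeasureTheory Set
open scoped ENNReal NNReal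

/-- The Morrey "norm" `‖f‖_{M_{1,λ}} = sup_{x ∈ ℝⁿ, r > 0} r^{λ-n} ∫_{B(x,r)} |f|`,
valued in `ℝ≥0∞`. -/
noncomputable def morreyNorm (n : ℕ) (lam : ℝ) (f : EuclideanSpace ℝ (Fin n) → ℝ) : ℝ≥0∞ :=
  ⨆ (x : EuclideanSpace ℝ (Fin n)) (r : ℝ) (_ : 0 < r),
    ENNReal.ofReal (r ^ (lam - (n:ℝ))) * ∫⁻ y in Metric.ball x r, ‖f y‖₊

open Metric

local notation "dim" => Module.finrank ℝ

lemma ENNReal.ofReal_rpow_sub_mul_pow {a : ℝ} (ha : 0 < a) (p : ℝ) (d : ℕ) :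
    ENNReal.ofReal (a ^ (p - d)) * ENNReal.ofReal (a ^ d) = ENNReal.ofReal (a ^ p) := by
  rw [← ENNReal.ofReal_mul (by positivity), ← Real.rpow_natCast, ← Real.rpow_add ha,
    sub_add_cancel]

noncomputable def radialMorreyNorm (d : ℕ) (lam : ℝ) (F : ℝ → ℝ≥0∞) : ℝ≥0∞ :=
  ⨆ (x : ℝ) (_ : 0 < x),
    ENNReal.ofReal (x ^ (lam - d)) * ∫⁻ ρ in Ioo 0 x, ENNReal.ofReal (ρ ^ (d - 1)) * F ρ

lemma radialMorreyNorm_enorm {φ : ℝ → ℝ} (hφ : ∀ ρ ∈ Ioi (0:ℝ), 0 ≤ φ ρ) (d : ℕ) (lam : ℝ) :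
    radialMorreyNorm d lam (fun ρ ↦ ‖φ ρ‖ₑ) = ⨆ (x : ℝ) (_ : 0 < x),
      ENNReal.ofReal (x ^ (lam - d)) * ∫⁻ ρ in Ioo 0 x, ENNReal.ofReal (φ ρ * ρ ^ (d - 1)) := by
  refine iSup_congr fun x ↦ iSup_congr fun _ ↦
    congrArg _ (setLIntegral_congr_fun measurableSet_Ioo fun ρ hρ ↦ ?_)
  rw [ENNReal.ofReal_mul (hφ ρ hρ.1), ← Real.enorm_eq_ofReal (hφ ρ hρ.1), mul_comm]

lemma antitoneOn_enorm_of_nonneg {φ : ℝ → ℝ} (hφ : ∀ ρ ∈ Ioi (0:ℝ), 0 ≤ φ ρ)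
    (hmono : AntitoneOn φ (Ioi 0)) : AntitoneOn (fun ρ ↦ ‖φ ρ‖ₑ) (Ioi 0) := fun a ha b hb hab ↦ by
  simp only [Real.enorm_eq_ofReal (hφ a ha), Real.enorm_eq_ofReal (hφ b hb)]
  exact ENNReal.ofReal_le_ofReal (hmono ha hb hab)

namespace MeasureTheory

section Ball

variable {E : Type*} [NormedAddCommGroup E] [MeasurableSpace E] (μ : Measure E)

lemma ofReal_rpow_mul_setLIntegral_ball_le_of_norm_le (g : E → ℝ≥0∞) (p : ℝ) {x : E} {r : ℝ}
    (hr : 0 < r) (hx : ‖x‖ ≤ 2 * r) :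
    ENNReal.ofReal (r ^ p) * ∫⁻ y in ball x r, g y ∂μ ≤ ENNReal.ofReal (3 ^ (-p)) *
      (ENNReal.ofReal ((3 * r) ^ p) * ∫⁻ y in ball 0 (3 * r), g y ∂μ) := by
  have hscale : (3 : ℝ) ^ (-p) * (3 * r) ^ p = r ^ p := by
    rw [Real.mul_rpow (by norm_num) hr.le, ← mul_assoc, ← Real.rpow_add (by norm_num),
      neg_add_cancel, Real.rpow_zero, one_mul]
  rw [← mul_assoc, ← ENNReal.ofReal_mul (by positivity), hscale]
  gcongr
  exact ball_subset_ball' (by rw [dist_zero_right]; linarith)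

variable {μ}

lemma setLIntegral_ball_le_of_add_le_norm [OpensMeasurableSpace E] {F : ℝ → ℝ≥0∞}
    (hF : AntitoneOn F (Ioi 0)) {x : E} {r t : ℝ} (ht : 0 < t) (htx : t + r ≤ ‖x‖) :
    ∫⁻ y in ball x r, F ‖y‖ ∂μ ≤ F t * μ (ball x r) := by
  rw [← setLIntegral_const]
  refine setLIntegral_mono' measurableSet_ball fun y hy ↦ hF ht (ht.trans_le ?_) ?_ <;>
  · have := norm_sub_norm_le x y
    rw [mem_ball, dist_eq_norm'] at hy
    linarith

end Ball

variable {E : Type*} [NormedAddCommGroup E] [NormedSpace ℝ E] [FiniteDimensional ℝ E]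
  [MeasurableSpace E] [BorelSpace E] [Nontrivial E] (μ : Measure E) [μ.IsAddHaarMeasure]

lemma lintegral_fun_norm_addHaar {f : ℝ → ℝ≥0∞} (hf : Measurable fun r : Ioi (0:ℝ) ↦ f r) :
    ∫⁻ x, f ‖x‖ ∂μ =
      dim E * μ (ball 0 1) * ∫⁻ y in Ioi (0:ℝ), ENNReal.ofReal (y ^ (dim E - 1)) * f y := by
  calc ∫⁻ x, f ‖x‖ ∂μ = ∫⁻ x : ({(0)}ᶜ : Set E), f ‖x.1‖ ∂(μ.comap (↑)) := by
        rw [lintegral_subtype_comap (measurableSet_singleton _).compl fun x ↦ f ‖x‖,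
          restrict_compl_singleton]
    _ = ∫⁻ x, f x.2 ∂μ.toSphere.prod (.volumeIoiPow (dim E - 1)) := by
        simpa using μ.measurePreserving_homeomorphUnitSphereProd.lintegral_comp_emb
          (Homeomorph.measurableEmbedding _) (f ∘ Subtype.val ∘ Prod.snd)
    _ = μ.toSphere univ * ∫⁻ x : Ioi (0:ℝ), f x ∂.volumeIoiPow (dim E - 1) := by
        simpa using lintegral_prod_mul (μ := μ.toSphere) (f := fun _ ↦ 1) aemeasurable_const
          hf.aemeasurable
    _ = _ := by
        rw [Measure.toSphere_apply_univ, Measure.volumeIoiPow,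
          lintegral_withDensity_eq_lintegral_mul _ (by fun_prop) hf,
          ← lintegral_subtype_comap measurableSet_Ioi]
        rfl

lemma setLIntegral_ball_zero_fun_norm {f : ℝ → ℝ≥0∞} (hf : Measurable fun r : Ioi (0:ℝ) ↦ f r)
    (R : ℝ) :
    ∫⁻ x in ball 0 R, f ‖x‖ ∂μ =
      dim E * μ (ball 0 1) * ∫⁻ y in Ioo 0 R, ENNReal.ofReal (y ^ (dim E - 1)) * f y := by
  have hball : (ball (0 : E) R).indicator (fun x ↦ f ‖x‖) = fun x ↦ (Iio R).indicator f ‖x‖ := by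
    ext; simp [indicator]
  rw [← lintegral_indicator measurableSet_ball, hball, lintegral_fun_norm_addHaar μ
    (hf.indicator (measurableSet_Iio.preimage measurable_subtype_coe)), ← Iio_inter_Ioi,
    ← Measure.restrict_restrict measurableSet_Iio, ← lintegral_indicator measurableSet_Iio]
  exact congrArg _ (lintegral_congr fun y ↦
    (indicator_mul_right _ (fun y ↦ ENNReal.ofReal (y ^ _)) f).symm)

lemma ofReal_rpow_mul_setLIntegral_ball_zero_le {F : ℝ → ℝ≥0∞}
    (hF : Measurable fun r : Ioi (0:ℝ) ↦ F r) (lam : ℝ) {R : ℝ} (hR : 0 < R) :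
    ENNReal.ofReal (R ^ (lam - dim E)) * ∫⁻ y in ball 0 R, F ‖y‖ ∂μ ≤
      dim E * μ (ball 0 1) * radialMorreyNorm (dim E) lam F := by
  rw [setLIntegral_ball_zero_fun_norm μ hF, mul_left_comm]
  gcongr
  exact le_iSup₂_of_le (f := fun x (_ : 0 < x) ↦ ENNReal.ofReal (x ^ (lam - dim E)) *
    ∫⁻ ρ in Ioo 0 x, ENNReal.ofReal (ρ ^ (dim E - 1)) * F ρ) R hR le_rfl

variable {μ}

lemma le_setLIntegral_ball_zero {F : ℝ → ℝ≥0∞} (hF : AntitoneOn F (Ioi 0)) (t : ℝ) :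
    F t * μ (ball 0 t) ≤ ∫⁻ y in ball 0 t, F ‖y‖ ∂μ := by
  rw [← setLIntegral_const]
  refine lintegral_mono_ae ?_
  filter_upwards [ae_restrict_mem measurableSet_ball,
    ae_restrict_of_ae (compl_mem_ae_iff.2 (measure_singleton (0 : E)))] with y hyt hy0
  have hy : 0 < ‖y‖ := norm_pos_iff.2 hy0
  exact hF hy (hy.trans (mem_ball_zero_iff.1 hyt)) (mem_ball_zero_iff.1 hyt).le

lemma ofReal_rpow_mul_setLIntegral_ball_le_of_add_le_norm {F : ℝ → ℝ≥0∞}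
    (hF : AntitoneOn F (Ioi 0)) {lam : ℝ} (hlam : 0 ≤ lam) {x : E} {r t : ℝ} (hr : 0 < r)
    (hrt : r ≤ t) (htx : t + r ≤ ‖x‖) :
    ENNReal.ofReal (r ^ (lam - dim E)) * ∫⁻ y in ball x r, F ‖y‖ ∂μ ≤
      ENNReal.ofReal (t ^ (lam - dim E)) * ∫⁻ y in ball 0 t, F ‖y‖ ∂μ := by
  have ht : 0 < t := hr.trans_le hrt
  calc ENNReal.ofReal (r ^ (lam - dim E)) * ∫⁻ y in ball x r, F ‖y‖ ∂μ
      ≤ ENNReal.ofReal (r ^ (lam - dim E)) * (F t * μ (ball x r)) := by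
        gcongr
        exact setLIntegral_ball_le_of_add_le_norm hF ht htx
    _ = ENNReal.ofReal (r ^ lam) * (F t * μ (ball 0 1)) := by
        rw [Measure.addHaar_ball_of_pos μ x hr, ← ENNReal.ofReal_rpow_sub_mul_pow hr lam]
        ring
    _ ≤ ENNReal.ofReal (t ^ lam) * (F t * μ (ball 0 1)) := by
        gcongr
    _ = ENNReal.ofReal (t ^ (lam - dim E)) * (F t * μ (ball 0 t)) := by
        rw [Measure.addHaar_ball_of_pos μ 0 ht, ← ENNReal.ofReal_rpow_sub_mul_pow ht lam]
        ring
    _ ≤ ENNReal.ofReal (t ^ (lam - dim E)) * ∫⁻ y in ball 0 t, F ‖y‖ ∂μ := by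
        gcongr
        exact le_setLIntegral_ball_zero hF t

variable (μ)

lemma ofReal_rpow_mul_setLIntegral_ball_le_radialMorreyNorm {F : ℝ → ℝ≥0∞}
    (hF : AntitoneOn F (Ioi 0)) {lam : ℝ} (hlam : 0 ≤ lam) (x : E) {r : ℝ} (hr : 0 < r) :
    ENNReal.ofReal (r ^ (lam - dim E)) * ∫⁻ y in ball x r, F ‖y‖ ∂μ ≤
      (ENNReal.ofReal (3 ^ (dim E - lam)) + 1) *
        (dim E * μ (ball 0 1) * radialMorreyNorm (dim E) lam F) := by
  have hFmeas : Measurable fun r : Ioi (0:ℝ) ↦ F r :=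
    Antitone.measurable fun a b hab ↦ hF a.2 b.2 hab
  rcases le_or_gt ‖x‖ (2 * r) with hx | hx
  · calc _ ≤ ENNReal.ofReal (3 ^ (dim E - lam)) *
            (ENNReal.ofReal ((3 * r) ^ (lam - dim E)) * ∫⁻ y in ball 0 (3 * r), F ‖y‖ ∂μ) := by
          simpa using ofReal_rpow_mul_setLIntegral_ball_le_of_norm_le μ (fun y ↦ F ‖y‖)
            (lam - dim E) hr hx
      _ ≤ ENNReal.ofReal (3 ^ (dim E - lam)) *
            (dim E * μ (ball 0 1) * radialMorreyNorm (dim E) lam F) :=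
          mul_le_mul_right
            (ofReal_rpow_mul_setLIntegral_ball_zero_le μ hFmeas lam (by positivity)) _
      _ ≤ _ := by gcongr; exact le_self_add
  · calc _ ≤ ENNReal.ofReal ((‖x‖ - r) ^ (lam - dim E)) * ∫⁻ y in ball 0 (‖x‖ - r), F ‖y‖ ∂μ :=
          ofReal_rpow_mul_setLIntegral_ball_le_of_add_le_norm hF hlam hr (by linarith) (by linarith)
      _ ≤ _ := ofReal_rpow_mul_setLIntegral_ball_zero_le μ hFmeas lam (by linarith)
      _ ≤ _ := le_mul_of_one_le_left' le_add_self

end MeasureTheory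

theorem statement2_general (n : ℕ) (hn : 1 ≤ n) (lam : ℝ) (hlam0 : 0 < lam) :
    ∃ C : ℝ, 0 < C ∧ ∀ (f : EuclideanSpace ℝ (Fin n) → ℝ) (φ : ℝ → ℝ),
      (∀ ρ ∈ Set.Ioi (0:ℝ), 0 ≤ φ ρ) → AntitoneOn φ (Set.Ioi (0:ℝ)) →
      (∀ x, f x = φ ‖x‖) →
      morreyNorm n lam f
        ≤ ENNReal.ofReal C *
          ⨆ (x : ℝ) (_ : 0 < x), ENNReal.ofReal (x ^ (lam - (n:ℝ))) *
            ∫⁻ ρ in Set.Ioo (0:ℝ) x, ENNReal.ofReal (φ ρ * ρ ^ (n - 1)) := by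
  have : Nontrivial (EuclideanSpace ℝ (Fin n)) :=
    Module.nontrivial_of_finrank_pos (R := ℝ) (by rwa [finrank_euclideanSpace_fin])
  set V := volume (ball (0 : EuclideanSpace ℝ (Fin n)) 1)
  have hV : V ≠ ∞ := measure_ball_lt_top.ne
  have hV0 : 0 < V.toReal := ENNReal.toReal_pos (measure_ball_pos _ _ one_pos).ne' hV
  refine ⟨n * V.toReal * (3 ^ (n - lam) + 1), by positivity, fun f φ hpos hmono hf ↦ ?_⟩
  have hC : ENNReal.ofReal (n * V.toReal * (3 ^ (n - lam) + 1)) =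
      (ENNReal.ofReal (3 ^ (n - lam)) + 1) * (n * V) := by
    rw [ENNReal.ofReal_mul (by positivity), ENNReal.ofReal_mul (by positivity),
      ENNReal.ofReal_natCast, ENNReal.ofReal_toReal hV,
      ENNReal.ofReal_add (by positivity) zero_le_one, ENNReal.ofReal_one, mul_comm]
  rw [hC, ← radialMorreyNorm_enorm hpos, morreyNorm, mul_assoc]
  refine iSup_le fun x ↦ iSup₂_le fun r hr ↦ ?_
  simp only [← enorm_eq_nnnorm, hf]
  simpa using ofReal_rpow_mul_setLIntegral_ball_le_radialMorreyNorm volume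
    (antitoneOn_enorm_of_nonneg hpos hmono) hlam0.le x hr

/-- For `n ≥ 1`, `0 < λ < n`, there is `C > 0` (depending only on `n, λ`) such that
for every radial decreasing `f(x) = φ(|x|)` with `φ ≥ 0` nonincreasing on `(0,∞)`,
`‖f‖_{M_{1,λ}} ≤ C · sup_{x>0} x^{λ-n} ∫_0^x φ(ρ) ρ^{n-1} dρ`. -/
theorem statement2 (n : ℕ) (hn : 1 ≤ n) (lam : ℝ) (hlam0 : 0 < lam) (hlamn : lam < n) :
    ∃ C : ℝ, 0 < C ∧ ∀ (f : EuclideanSpace ℝ (Fin n) → ℝ) (φ : ℝ → ℝ),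
      (∀ ρ ∈ Set.Ioi (0:ℝ), 0 ≤ φ ρ) → AntitoneOn φ (Set.Ioi (0:ℝ)) →
      (∀ x, f x = φ ‖x‖) →
      morreyNorm n lam f
        ≤ ENNReal.ofReal C *
          ⨆ (x : ℝ) (_ : 0 < x), ENNReal.ofReal (x ^ (lam - (n:ℝ))) *
            ∫⁻ ρ in Set.Ioo (0:ℝ) x, ENNReal.ofReal (φ ρ * ρ ^ (n - 1)) :=
  statement2_general n hn lam hlam0
end

section
/- Let $f : \mathbb{R} \to \mathbb{R}$ be defined by $f(x) = \sum_{k=0}^{\infty} \chi_{[k^2, k^2+1]}(x)$. Then the Morrey norm $\|f\|_{\mathcal{M}_{1,1/2}(\mathbb{R})} = \sup_{I} |I|^{-1/2} \int_I f$, where the supremum is taken over all bounded open intervals $I \subset \mathbb{R}$, is finite; in fact there is an absolute constant $C$ with $\|f\|_{\mathcal{M}_{1,1/2}(\mathbb{R})} \le C$. -/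
/-!
Writing `f = ∑ₖ χ_{Jₖ}` with `Jₖ = [k², k² + 1]`, the integral of `f` over `I = (a, b)` is at most
`∑ₖ |I ∩ Jₖ|`. The blocks overlap only in null sets, so this sum is at most `|I|`; and a block
meeting `I` has `a - 1 < k² < b`, i.e. `k ∈ [√(a - 1), √b)`, which leaves at most `√|I| + 2`
blocks of measure one. Hence `|I|^{-1/2} ∫_I f ≤ min (√|I|) (1 + 2 / √|I|) ≤ 3`.
-/

open MeasureTheory Set
open scoped ENNReal NNReal

/-- The one-dimensional Morrey "norm"
`‖f‖_{M_{1,λ}(ℝ)} = sup_I |I|^{λ-1} ∫_I |f|`, supremum over bounded open intervals. -/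
noncomputable def morreyNorm1 (lam : ℝ) (f : ℝ → ℝ) : ℝ≥0∞ :=
  ⨆ (a : ℝ) (b : ℝ) (_ : a < b),
    ENNReal.ofReal ((b - a) ^ (lam - 1)) * ∫⁻ y in Set.Ioo a b, ‖f y‖₊

open Function

lemma Real.sqrt_le_sqrt_add_sqrt_sub (u v : ℝ) : √v ≤ √u + √(v - u) := by
  rcases le_total u 0 with hu | hu
  · rw [Real.sqrt_eq_zero'.mpr hu, zero_add]
    exact Real.sqrt_le_sqrt (by linarith)
  rcases le_total v u with hvu | hvu
  · exact (Real.sqrt_le_sqrt hvu).trans (le_add_of_nonneg_right (Real.sqrt_nonneg _))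
  rw [Real.sqrt_le_left (by positivity)]
  nlinarith [Real.sq_sqrt hu, Real.sq_sqrt (sub_nonneg.mpr hvu), Real.sqrt_nonneg u,
    Real.sqrt_nonneg (v - u)]

lemma Nat.mem_Ico_ceil_sqrt {u v : ℝ} {k : ℕ} (hu : u < (k:ℝ) ^ 2) (hv : (k:ℝ) ^ 2 < v) :
    k ∈ Finset.Ico ⌈√u⌉₊ ⌈√v⌉₊ := by
  rw [Finset.mem_Ico, Nat.ceil_le, Nat.lt_ceil]
  exact ⟨Real.sqrt_le_left (by positivity) |>.mpr hu.le,
    Real.lt_sqrt (by positivity) |>.mpr hv⟩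

lemma Nat.card_Ico_ceil_sqrt_le (u v : ℝ) :
    ((Finset.Ico ⌈√u⌉₊ ⌈√v⌉₊).card : ℝ) ≤ √(v - u) + 1 := by
  rw [Nat.card_Ico]
  rcases le_total ⌈√u⌉₊ ⌈√v⌉₊ with h | h
  · rw [Nat.cast_sub h]
    have := Nat.ceil_lt_add_one (Real.sqrt_nonneg v)
    have := Nat.le_ceil √u
    linarith [Real.sqrt_le_sqrt_add_sqrt_sub u v]
  · rw [Nat.sub_eq_zero_of_le h, Nat.cast_zero]
    positivity

lemma lintegral_enorm_tsum_indicator_le {α ι : Type*} [MeasurableSpace α] [Countable ι]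
    (μ : Measure α) {s : ι → Set α} (hs : ∀ k, MeasurableSet (s k)) :
    ∫⁻ y, ‖∑' k, (s k).indicator (fun _ => (1:ℝ)) y‖ₑ ∂μ ≤ ∑' k, μ (s k) := by
  have hnonneg : ∀ y k, 0 ≤ (s k).indicator (fun _ => (1:ℝ)) y :=
    fun y k => Set.indicator_nonneg (fun _ _ => zero_le_one) y
  have hpt : ∀ y, ‖∑' k, (s k).indicator (fun _ => (1:ℝ)) y‖ₑ ≤
      ∑' k, (s k).indicator (fun _ => (1:ℝ≥0∞)) y := by
    intro y
    rw [Real.enorm_eq_ofReal (tsum_nonneg (hnonneg y))]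
    by_cases hsum : Summable fun k => (s k).indicator (fun _ => (1:ℝ)) y
    · rw [ENNReal.ofReal_tsum_of_nonneg (hnonneg y) hsum]
      refine le_of_eq (tsum_congr fun k => ?_)
      by_cases hy : y ∈ s k <;> simp [hy]
    · simp [tsum_eq_zero_of_not_summable hsum]
  calc _ ≤ ∫⁻ y, ∑' k, (s k).indicator (fun _ => (1:ℝ≥0∞)) y ∂μ := lintegral_mono hpt
    _ = ∑' k, μ (s k) := by
      rw [lintegral_tsum fun k => (measurable_const.indicator (hs k)).aemeasurable]
      exact tsum_congr fun k => lintegral_indicator_one (hs k)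

def sqBlock (k : ℕ) : Set ℝ := Icc ((k:ℝ) ^ 2) ((k:ℝ) ^ 2 + 1)

lemma measurableSet_sqBlock (k : ℕ) : MeasurableSet (sqBlock k) := measurableSet_Icc

lemma volume_sqBlock (k : ℕ) : volume (sqBlock k) = 1 := by simp [sqBlock]

lemma pairwise_aedisjoint_sqBlock : Pairwise (AEDisjoint volume on sqBlock) := by
  have key : ∀ i j : ℕ, i < j → AEDisjoint volume (sqBlock i) (sqBlock j) := by
    intro i j hij
    have hij' : (i:ℝ) + 1 ≤ j := by exact_mod_cast hij
    -- `i ^ 2 + 1 ≤ j ^ 2`, so the two blocks can share only the point `j ^ 2`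
    refine measure_mono_null (t := {(j:ℝ) ^ 2}) ?_ (measure_singleton _)
    rintro x ⟨⟨-, hxi⟩, ⟨hxj, -⟩⟩
    exact le_antisymm (by nlinarith [Nat.cast_nonneg (α := ℝ) i]) hxj
  intro i j hij
  rcases hij.lt_or_gt with h | h
  · exact key i j h
  · exact (key j i h).symm

lemma tsum_restrict_sqBlock_le_length (a b : ℝ) :
    ∑' k, volume.restrict (Ioo a b) (sqBlock k) ≤ ENNReal.ofReal (b - a) := by
  calc ∑' k, volume.restrict (Ioo a b) (sqBlock k) ≤ volume.restrict (Ioo a b) univ :=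
        tsum_measure_le_measure_univ (fun k => (measurableSet_sqBlock k).nullMeasurableSet)
          fun i j hij => Measure.absolutelyContinuous_restrict (pairwise_aedisjoint_sqBlock hij)
    _ = ENNReal.ofReal (b - a) := by simp

lemma tsum_restrict_sqBlock_le_sqrt (a b : ℝ) :
    ∑' k, volume.restrict (Ioo a b) (sqBlock k) ≤ ENNReal.ofReal (√(b - a) + 2) := by
  set T := Finset.Ico ⌈√(a - 1)⌉₊ ⌈√b⌉₊
  have h_null : ∀ k ∉ T, volume.restrict (Ioo a b) (sqBlock k) = 0 := by
    intro k hk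
    rw [Measure.restrict_apply (measurableSet_sqBlock k)]
    convert measure_empty (μ := (volume : Measure ℝ))
    refine eq_empty_of_forall_notMem fun x ⟨⟨_, _⟩, _, _⟩ => hk ?_
    exact Nat.mem_Ico_ceil_sqrt (by linarith) (by linarith)
  have h_card : (T.card : ℝ) ≤ √(b - a) + 2 := by
    have h_Ico := Nat.card_Ico_ceil_sqrt_le (a - 1) b
    have h_sqrt := Real.sqrt_le_sqrt_add_sqrt_sub 1 (b - (a - 1))
    rw [Real.sqrt_one, show b - (a - 1) - 1 = b - a by ring] at h_sqrt
    linarith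
  calc ∑' k, volume.restrict (Ioo a b) (sqBlock k)
      = ∑ k ∈ T, volume.restrict (Ioo a b) (sqBlock k) := tsum_eq_sum h_null
    _ ≤ ∑ k ∈ T, volume (sqBlock k) := by
      gcongr
      exact Measure.restrict_le_self
    _ = T.card := by simp [volume_sqBlock]
    _ ≤ ENNReal.ofReal (√(b - a) + 2) := by
      rw [← ENNReal.ofReal_natCast]
      exact ENNReal.ofReal_le_ofReal h_card

lemma lintegral_Ioo_le_min {f : ℝ → ℝ}
    (hf : ∀ x, f x = ∑' k, (sqBlock k).indicator (fun _ => (1:ℝ)) x) (a b : ℝ) :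
    ∫⁻ y in Ioo a b, ‖f y‖₊ ≤ ENNReal.ofReal (min (b - a) (√(b - a) + 2)) := by
  have h_sum : ∫⁻ y in Ioo a b, ‖f y‖₊ ≤ ∑' k, volume.restrict (Ioo a b) (sqBlock k) := by
    simp_rw [← enorm_eq_nnnorm, hf]
    exact lintegral_enorm_tsum_indicator_le _ measurableSet_sqBlock
  rw [ENNReal.ofReal_min]
  exact le_min (h_sum.trans (tsum_restrict_sqBlock_le_length a b))
    (h_sum.trans (tsum_restrict_sqBlock_le_sqrt a b))

lemma rpow_neg_half_mul_min_le_three {t : ℝ} (ht : 0 < t) :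
    t ^ (1 / 2 - 1 : ℝ) * min t (√t + 2) ≤ 3 := by
  rw [show (1 / 2 - 1 : ℝ) = -(1 / 2) by norm_num, Real.rpow_neg ht.le, ← Real.sqrt_eq_rpow,
    inv_mul_le_iff₀ (Real.sqrt_pos.mpr ht)]
  have h_sq := Real.sq_sqrt ht.le
  rcases le_total t 1 with h | h
  · have : √t ≤ 1 := Real.sqrt_le_one.mpr h
    nlinarith [min_le_left t (√t + 2), Real.sqrt_nonneg t]
  · have : 1 ≤ √t := Real.one_le_sqrt.mpr h
    linarith [min_le_right t (√t + 2)]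

/-- For `f = ∑_{k=0}^∞ χ_{[k², k²+1]}`, the Morrey norm
`‖f‖_{M_{1,1/2}(ℝ)}` is finite; indeed it is bounded by an absolute constant `C`. -/
theorem statement7 (f : ℝ → ℝ)
    (hf : ∀ x, f x = ∑' k : ℕ,
      Set.indicator (Set.Icc ((k:ℝ)^2) ((k:ℝ)^2 + 1)) (fun _ => (1:ℝ)) x) :
    ∃ C : ℝ, 0 < C ∧ morreyNorm1 (1/2) f ≤ ENNReal.ofReal C := by
  refine ⟨3, by norm_num, iSup_le fun a => iSup_le fun b => iSup_le fun hab => ?_⟩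
  have ht : 0 < b - a := sub_pos.mpr hab
  calc ENNReal.ofReal ((b - a) ^ (1 / 2 - 1 : ℝ)) * ∫⁻ y in Ioo a b, ‖f y‖₊
      ≤ ENNReal.ofReal ((b - a) ^ (1 / 2 - 1 : ℝ)) *
          ENNReal.ofReal (min (b - a) (√(b - a) + 2)) := by
        gcongr
        exact lintegral_Ioo_le_min hf a b
    _ = ENNReal.ofReal ((b - a) ^ (1 / 2 - 1 : ℝ) * min (b - a) (√(b - a) + 2)) :=
        (ENNReal.ofReal_mul (Real.rpow_nonneg ht.le _)).symm
    _ ≤ ENNReal.ofReal 3 := ENNReal.ofReal_le_ofReal (rpow_neg_half_mul_min_le_three ht)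
end

section
/- Let $f : \mathbb{R} \to \mathbb{R}$ be defined by $f(x) = \sum_{k=0}^{\infty} \chi_{[k^2, k^2+1]}(x)$, and let $Mf$ denote its Hardy–Littlewood maximal function. Then for every integer $i \ge 1$, $$\int_{i^2}^{(i+1)^2} Mf(x)\, dx \;\ge\; \ln i.$$ -/
/-!
For `x ∈ (i², (i+1)²)` the interval `(i², x + 1)` contains `x` and the whole block
`[i², i² + 1]` on which `f = 1`, so `Mf(x) ≥ 1 / (x + 1 - i²)`. Integrating this bound over
`(i², (i+1)²)` gives `log (2i + 2) ≥ log i`.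
-/

open MeasureTheory Set
open scoped ENNReal NNReal

/-- The one-dimensional Hardy–Littlewood maximal function
`Mf(x) = sup_{I ∋ x} |I|⁻¹ ∫_I |f|`, supremum over bounded open intervals containing `x`. -/
noncomputable def maximalFn1 (f : ℝ → ℝ) (x : ℝ) : ℝ≥0∞ :=
  ⨆ (a : ℝ) (b : ℝ) (_ : a < b) (_ : x ∈ Set.Ioo a b),
    (ENNReal.ofReal (b - a))⁻¹ * ∫⁻ y in Set.Ioo a b, ‖f y‖₊

theorem setLAverage_Ioo_le_maximalFn1 (f : ℝ → ℝ) {a b x : ℝ} (hx : x ∈ Ioo a b) :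
    (ENNReal.ofReal (b - a))⁻¹ * ∫⁻ y in Ioo a b, ‖f y‖₊ ≤ maximalFn1 f x :=
  le_iSup₂_of_le a b <| le_iSup₂_of_le (hx.1.trans hx.2) hx le_rfl

theorem one_le_tsum_indicator_Icc_sq {k : ℕ} {y : ℝ}
    (hy : y ∈ Icc ((k : ℝ) ^ 2) ((k : ℝ) ^ 2 + 1)) :
    1 ≤ ∑' j : ℕ, (Icc ((j : ℝ) ^ 2) ((j : ℝ) ^ 2 + 1)).indicator (fun _ => (1 : ℝ)) y := by
  have hsupp : (Function.support fun j : ℕ =>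
      (Icc ((j : ℝ) ^ 2) ((j : ℝ) ^ 2 + 1)).indicator (fun _ => (1 : ℝ)) y).Finite := by
    refine (finite_Iic ⌊y⌋₊).subset fun j hj => ?_
    have hjy : (j : ℝ) ^ 2 ≤ y := (mem_of_indicator_ne_zero hj).1
    have hj_le : (j : ℝ) ≤ (j : ℝ) ^ 2 := by
      rcases j.eq_zero_or_pos with rfl | hj0
      · simp
      · exact le_self_pow₀ (by exact_mod_cast hj0) two_ne_zero
    exact Nat.le_floor (hj_le.trans hjy)
  calc (1 : ℝ) = (Icc ((k : ℝ) ^ 2) ((k : ℝ) ^ 2 + 1)).indicator (fun _ => (1 : ℝ)) y :=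
        (indicator_of_mem hy fun _ => (1 : ℝ)).symm
    _ ≤ _ := (summable_of_hasFiniteSupport hsupp).le_tsum k fun j _ =>
        indicator_nonneg (fun _ _ => zero_le_one) y

theorem one_le_setLIntegral_nnnorm {f : ℝ → ℝ} {c d : ℝ}
    (hf : ∀ y ∈ Ioo c (c + 1), 1 ≤ ‖f y‖) (hd : c + 1 ≤ d) :
    1 ≤ ∫⁻ y in Ioo c d, ‖f y‖₊ :=
  calc (1 : ℝ≥0∞) = ∫⁻ _ in Ioo c (c + 1), 1 := by simp [Real.volume_Ioo]
    _ ≤ ∫⁻ y in Ioo c (c + 1), ‖f y‖₊ :=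
        setLIntegral_mono' measurableSet_Ioo fun y hy => by exact_mod_cast hf y hy
    _ ≤ ∫⁻ y in Ioo c d, ‖f y‖₊ := lintegral_mono_set (Ioo_subset_Ioo_right hd)

theorem ofReal_inv_le_maximalFn1 {f : ℝ → ℝ} {c x : ℝ}
    (hf : ∀ y ∈ Ioo c (c + 1), 1 ≤ ‖f y‖) (hx : c < x) :
    ENNReal.ofReal (x + 1 - c)⁻¹ ≤ maximalFn1 f x := by
  rw [ENNReal.ofReal_inv_of_pos (by linarith), ← mul_one (ENNReal.ofReal _)⁻¹]
  calc (ENNReal.ofReal (x + 1 - c))⁻¹ * 1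
      ≤ (ENNReal.ofReal (x + 1 - c))⁻¹ * ∫⁻ y in Ioo c (x + 1), ‖f y‖₊ := by
        gcongr
        exact one_le_setLIntegral_nnnorm hf (by linarith)
    _ ≤ maximalFn1 f x := setLAverage_Ioo_le_maximalFn1 f ⟨hx, by linarith⟩

theorem setLIntegral_Ioo_ofReal_inv_sub {a c d : ℝ} (hac : a < c) (hcd : c ≤ d) :
    ∫⁻ x in Ioo c d, ENNReal.ofReal (x - a)⁻¹ =
      ENNReal.ofReal (Real.log ((d - a) / (c - a))) := by
  have hpos : ∀ x ∈ Icc c d, 0 < x - a := fun x hx => by linarith [hx.1]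
  have hcont : ContinuousOn (fun x => (x - a)⁻¹) (Icc c d) :=
    (continuousOn_id.sub continuousOn_const).inv₀ fun x hx => (hpos x hx).ne'
  rw [← ofReal_integral_eq_lintegral_ofReal (hcont.integrableOn_Icc.mono_set Ioo_subset_Icc_self)
    ((ae_restrict_mem measurableSet_Ioo).mono fun x hx =>
      inv_nonneg.mpr (hpos x (Ioo_subset_Icc_self hx)).le)]
  rw [← integral_Ioc_eq_integral_Ioo, ← intervalIntegral.integral_of_le hcd,
    intervalIntegral.integral_comp_sub_right (fun x => x⁻¹),
    integral_inv_of_pos (by linarith) (by linarith)]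

/-- For `f = ∑_{k=0}^∞ χ_{[k², k²+1]}` and every integer `i ≥ 1`,
`∫_{i²}^{(i+1)²} Mf ≥ ln i`. -/
theorem statement9 (f : ℝ → ℝ)
    (hf : ∀ x, f x = ∑' k : ℕ,
      Set.indicator (Set.Icc ((k:ℝ)^2) ((k:ℝ)^2 + 1)) (fun _ => (1:ℝ)) x) :
    ∀ i : ℕ, 1 ≤ i →
      ENNReal.ofReal (Real.log i)
        ≤ ∫⁻ x in Set.Ioo ((i:ℝ)^2) (((i:ℝ) + 1)^2), maximalFn1 f x := by
  intro i hi
  have hblock : ∀ y ∈ Ioo ((i : ℝ) ^ 2) ((i : ℝ) ^ 2 + 1), 1 ≤ ‖f y‖ := fun y hy => by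
    rw [hf]
    exact (one_le_tsum_indicator_Icc_sq (Ioo_subset_Icc_self hy)).trans (le_abs_self _)
  have hi_real : (1 : ℝ) ≤ i := by exact_mod_cast hi
  calc ENNReal.ofReal (Real.log i)
      ≤ ENNReal.ofReal (Real.log ((((i : ℝ) + 1) ^ 2 - ((i : ℝ) ^ 2 - 1)) /
          ((i : ℝ) ^ 2 - ((i : ℝ) ^ 2 - 1)))) := by
        refine ENNReal.ofReal_le_ofReal (Real.log_le_log (by positivity) ?_)
        rw [sub_sub_cancel, div_one]
        nlinarith
    _ = ∫⁻ x in Ioo ((i : ℝ) ^ 2) (((i : ℝ) + 1) ^ 2),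
          ENNReal.ofReal (x - ((i : ℝ) ^ 2 - 1))⁻¹ :=
        (setLIntegral_Ioo_ofReal_inv_sub (by linarith) (by nlinarith)).symm
    _ ≤ _ := setLIntegral_mono' measurableSet_Ioo fun x hx => by
        rw [sub_sub_eq_add_sub]
        exact ofReal_inv_le_maximalFn1 hblock hx.1
end

section
/- Let $f : \mathbb{R} \to \mathbb{R}$ be defined by $f(x) = \sum_{k=0}^{\infty} \chi_{[k^2, k^2+1]}(x)$, and let $Mf$ denote its Hardy–Littlewood maximal function. Then $\|Mf\|_{\mathcal{M}_{1,1/2}(\mathbb{R})} = \infty$; more precisely $\sup_{k \in \mathbb{N}} k^{-1} \int_0^{k^2} Mf(x)\, dx = \infty$. -/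
/-!
On the block `(j², (j + 1)²)` the interval `(j² - 1, x + 1)` contains the bump `[j², j² + 1]`, so
`Mf(x) ≥ 1 / (x - j² + 2)` there and the block contributes at least `log ((2j + 3) / 2)` to
`∫ Mf`. Summing over `j < 2m`, the blocks with `j ≥ m` alone give
`(2m)⁻¹ ∫_0^{(2m)²} Mf ≥ log ((2m + 3) / 2) / 2 → ∞`. The interval `(0, k²)` has
`|I|^{1/2 - 1} = k⁻¹`, so the Morrey norm dominates these averages.
-/

open MeasureTheory Set
open scoped ENNReal NNReal

/-- The one-dimensional Morrey "norm" of an `ℝ≥0∞`-valued function: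
`sup_I |I|^{λ-1} ∫_I g`, supremum over bounded open intervals. -/
noncomputable def morreyNorm1E (lam : ℝ) (g : ℝ → ℝ≥0∞) : ℝ≥0∞ :=
  ⨆ (a : ℝ) (b : ℝ) (_ : a < b),
    ENNReal.ofReal ((b - a) ^ (lam - 1)) * ∫⁻ y in Set.Ioo a b, g y

theorem lintegral_Ioo_inv_sub {a b d : ℝ} (hab : a < b) (hbd : b ≤ d) :
    ∫⁻ x in Ioo b d, (ENNReal.ofReal (x - a))⁻¹ =
      ENNReal.ofReal (Real.log ((d - a) / (b - a))) := by
  have hpos : ∀ x ∈ Icc b d, 0 < x - a := fun x hx => sub_pos.2 (hab.trans_le hx.1)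
  have hint : IntegrableOn (fun x => (x - a)⁻¹) (Ioo b d) :=
    (ContinuousOn.inv₀ (by fun_prop) fun x hx => (hpos x hx).ne').integrableOn_Icc.mono_set
      Ioo_subset_Icc_self
  have hnonneg : 0 ≤ᵐ[volume.restrict (Ioo b d)] fun x => (x - a)⁻¹ :=
    (ae_restrict_iff' measurableSet_Ioo).2 <| .of_forall fun x hx =>
      (inv_pos.2 (hpos x (Ioo_subset_Icc_self hx))).le
  rw [setLIntegral_congr_fun measurableSet_Ioo fun x hx =>
      (ENNReal.ofReal_inv_of_pos (hpos x (Ioo_subset_Icc_self hx))).symm,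
    ← ofReal_integral_eq_lintegral_ofReal hint hnonneg, ← integral_Ioc_eq_integral_Ioo,
    ← intervalIntegral.integral_of_le hbd, intervalIntegral.integral_comp_sub_right fun x => x⁻¹,
    integral_inv_of_pos (sub_pos.2 hab) (sub_pos.2 (hab.trans_le hbd))]

theorem sum_setLIntegral_Ioo_succ_le {a : ℕ → ℝ} (ha : Monotone a) (g : ℝ → ℝ≥0∞) (k : ℕ) :
    ∑ j ∈ Finset.range k, ∫⁻ x in Ioo (a j) (a (j + 1)), g x ≤
      ∫⁻ x in Ioo (a 0) (a k), g x := by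
  have hdisj := ha.pairwise_disjoint_on_Ioo_succ
  simp only [Order.succ_eq_add_one] at hdisj
  rw [← lintegral_biUnion_finset (hdisj.set_pairwise _) fun _ _ => measurableSet_Ioo]
  exact lintegral_mono_set <| iUnion₂_subset fun j hj =>
    Ioo_subset_Ioo (ha (Nat.zero_le j)) (ha (Finset.mem_range.1 hj))

theorem nsmul_le_sum_range_add_self {M : Type*} [AddCommMonoid M] [PartialOrder M]
    [IsOrderedAddMonoid M] [CanonicallyOrderedAdd M] {u : ℕ → M} (hu : Monotone u) (m : ℕ) :
    m • u m ≤ ∑ j ∈ Finset.range (m + m), u j := by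
  rw [Finset.sum_range_add]
  calc m • u m = ∑ _j ∈ Finset.range m, u m := by simp
    _ ≤ ∑ j ∈ Finset.range m, u (m + j) := Finset.sum_le_sum fun j _ => hu (Nat.le_add_right m j)
    _ ≤ _ := le_add_self

theorem inv_mul_setLIntegral_le_morreyNorm1E_half (g : ℝ → ℝ≥0∞) {r : ℝ} (hr : 0 < r) :
    (ENNReal.ofReal r)⁻¹ * ∫⁻ y in Ioo 0 (r ^ 2), g y ≤ morreyNorm1E (1 / 2) g := by
  have hcoef : (r ^ 2 - 0) ^ ((1 : ℝ) / 2 - 1) = r⁻¹ := by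
    rw [sub_zero, ← Real.rpow_natCast, ← Real.rpow_mul hr.le]
    norm_num [Real.rpow_neg_one]
  refine le_iSup₂_of_le (0 : ℝ) (r ^ 2) (le_iSup_of_le (by positivity) ?_)
  rw [hcoef, ENNReal.ofReal_inv_of_pos hr]

theorem inv_le_maximalFn1 {f : ℝ → ℝ} {c x : ℝ} (hf : ∀ y ∈ Ioo c (c + 1), 1 ≤ ‖f y‖)
    (hx : c < x) : (ENNReal.ofReal (x - (c - 2)))⁻¹ ≤ maximalFn1 f x := by
  have hbump : 1 ≤ ∫⁻ y in Ioo (c - 1) (x + 1), (‖f y‖₊ : ℝ≥0∞) :=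
    calc (1 : ℝ≥0∞) = ∫⁻ _ in Ioo c (c + 1), 1 := by simp
      _ ≤ ∫⁻ y in Ioo c (c + 1), (‖f y‖₊ : ℝ≥0∞) :=
        setLIntegral_mono' measurableSet_Ioo fun y hy => by exact_mod_cast hf y hy
      _ ≤ _ := lintegral_mono_set (Ioo_subset_Ioo (by linarith) (by linarith))
  calc (ENNReal.ofReal (x - (c - 2)))⁻¹ = (ENNReal.ofReal (x + 1 - (c - 1)))⁻¹ * 1 := by
        ring_nf
    _ ≤ (ENNReal.ofReal (x + 1 - (c - 1)))⁻¹ * ∫⁻ y in Ioo (c - 1) (x + 1), (‖f y‖₊ : ℝ≥0∞) := by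
        gcongr
    _ ≤ maximalFn1 f x :=
        le_iSup₂_of_le (c - 1) (x + 1) <|
          le_iSup₂_of_le (by linarith) ⟨by linarith, by linarith⟩ le_rfl

noncomputable def squareBumps (x : ℝ) : ℝ :=
  ∑' k : ℕ, (Icc ((k : ℝ) ^ 2) ((k : ℝ) ^ 2 + 1)).indicator (fun _ => (1 : ℝ)) x

theorem one_le_squareBumps {j : ℕ} {x : ℝ} (hx : x ∈ Icc ((j : ℝ) ^ 2) ((j : ℝ) ^ 2 + 1)) :
    1 ≤ squareBumps x := by
  have hsum : Summable fun k : ℕ =>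
      (Icc ((k : ℝ) ^ 2) ((k : ℝ) ^ 2 + 1)).indicator (fun _ => (1 : ℝ)) x := by
    refine summable_of_ne_finset_zero (s := Finset.range (⌈x⌉₊ + 1)) fun k hk => ?_
    refine indicator_of_notMem (fun hmem => ?_) _
    have hk : (⌈x⌉₊ : ℝ) + 1 ≤ k := by exact_mod_cast not_lt.1 (Finset.mem_range.not.1 hk)
    have : (k : ℝ) ≤ (k : ℝ) ^ 2 := by nlinarith
    linarith [hmem.1, Nat.le_ceil x]
  simpa [squareBumps, indicator_of_mem hx] using
    hsum.le_tsum j fun _ _ => indicator_nonneg (fun _ _ => zero_le_one) x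

theorem ofReal_log_le_lintegral_maximalFn1_squareBumps (j : ℕ) :
    ENNReal.ofReal (Real.log ((2 * j + 3) / 2)) ≤
      ∫⁻ x in Ioo ((j : ℝ) ^ 2) (((j + 1 : ℕ) : ℝ) ^ 2), maximalFn1 squareBumps x := by
  have hlog : (((j + 1 : ℕ) : ℝ) ^ 2 - ((j : ℝ) ^ 2 - 2)) / ((j : ℝ) ^ 2 - ((j : ℝ) ^ 2 - 2)) =
      (2 * j + 3) / 2 := by push_cast; ring
  rw [← hlog, ← lintegral_Ioo_inv_sub (by linarith) (by gcongr; omega)]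
  refine setLIntegral_mono' measurableSet_Ioo fun x hx => inv_le_maximalFn1 (fun y hy => ?_) hx.1
  rw [Real.norm_eq_abs]
  exact (one_le_squareBumps ⟨hy.1.le, hy.2.le⟩).trans (le_abs_self _)

theorem iSup_inv_mul_lintegral_maximalFn1_squareBumps :
    (⨆ (k : ℕ) (_ : 1 ≤ k),
      (k : ℝ≥0∞)⁻¹ * ∫⁻ x in Ioo (0 : ℝ) ((k : ℝ) ^ 2), maximalFn1 squareBumps x) = ⊤ := by
  set L : ℕ → ℝ≥0∞ := fun j => ENNReal.ofReal (Real.log ((2 * j + 3) / 2))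
  have hL : Monotone L := fun i j hij => ENNReal.ofReal_le_ofReal <|
    Real.log_le_log (by positivity) (by gcongr)
  have hLtop : Filter.Tendsto (fun m => L m / 2) Filter.atTop (nhds ⊤) := by
    have h := ENNReal.Tendsto.div_const (b := 2) (ENNReal.tendsto_ofReal_atTop.comp <|
      Real.tendsto_log_atTop.comp <| Filter.tendsto_atTop_mono
        (f := fun m : ℕ => (m : ℝ)) (g := fun m : ℕ => (2 * (m : ℝ) + 3) / 2)
        (fun m => by linarith) tendsto_natCast_atTop_atTop) (by simp)
    rwa [ENNReal.top_div_of_ne_top (by simp)] at h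
  refine top_unique <| le_of_tendsto hLtop <| Filter.eventually_atTop.2 ⟨1, fun m hm => ?_⟩
  refine le_iSup₂_of_le (m + m) (by omega) ?_
  have hsum : ∑ j ∈ Finset.range (m + m), L j ≤
      ∫⁻ x in Ioo (0 : ℝ) (((m + m : ℕ) : ℝ) ^ 2), maximalFn1 squareBumps x := by
    have hsq : Monotone fun j : ℕ => (j : ℝ) ^ 2 := fun i j hij =>
      pow_le_pow_left₀ (Nat.cast_nonneg _) (Nat.cast_le.2 hij) 2
    refine (Finset.sum_le_sum fun j _ => ofReal_log_le_lintegral_maximalFn1_squareBumps j).trans ?_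
    simpa using sum_setLIntegral_Ioo_succ_le hsq (maximalFn1 squareBumps) (m + m)
  calc L m / 2 = ((m + m : ℕ) : ℝ≥0∞)⁻¹ * (m • L m) := by
        rw [nsmul_eq_mul, Nat.cast_add, ← two_mul, ENNReal.mul_inv (by simp) (by simp), mul_assoc,
          ← mul_assoc _ (m : ℝ≥0∞), ENNReal.inv_mul_cancel (Nat.cast_ne_zero.2 (by omega))
            (ENNReal.natCast_ne_top m), one_mul, ENNReal.div_eq_inv_mul]
    _ ≤ _ := by gcongr; exact (nsmul_le_sum_range_add_self hL m).trans hsum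

/-- For `f = ∑_{k=0}^∞ χ_{[k², k²+1]}`, `‖Mf‖_{M_{1,1/2}(ℝ)} = ∞`;
more precisely `sup_{k ≥ 1} k⁻¹ ∫_0^{k²} Mf = ∞`. -/
theorem statement10 (f : ℝ → ℝ)
    (hf : ∀ x, f x = ∑' k : ℕ,
      Set.indicator (Set.Icc ((k:ℝ)^2) ((k:ℝ)^2 + 1)) (fun _ => (1:ℝ)) x) :
    morreyNorm1E (1/2) (maximalFn1 f) = ⊤ ∧
    (⨆ (k : ℕ) (_ : 1 ≤ k),
      ((k : ℝ≥0∞))⁻¹ * ∫⁻ x in Set.Ioo (0:ℝ) ((k:ℝ)^2), maximalFn1 f x) = ⊤ := by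
  obtain rfl : f = squareBumps := funext hf
  have hsup := iSup_inv_mul_lintegral_maximalFn1_squareBumps
  refine ⟨top_unique (hsup ▸ iSup₂_le fun k hk => ?_), hsup⟩
  simpa using inv_mul_setLIntegral_le_morreyNorm1E_half (maximalFn1 squareBumps)
    (Nat.cast_pos.2 hk : (0 : ℝ) < k)
end
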